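/- Let k be a field, n a natural number, Q an additive submonoid of ℤⁿ (equivalently, of Fin n → ℤ), and q ∈ Q with q ≠ 0. For a face F of Q (an additive submonoid F ≤ Q with a + b ∈ F ⟹ a ∈ F and b ∈ F for a, b ∈ Q), let p_F denote the ideal of the monoid algebra k[Q] spanned by the monomials x^p with p ∈ Q \ F. Then the radical of the principal ideal (x^q) of k[Q] equals the intersection of the ideals p_F over all faces F of Q with q ∉ F: √(x^q) = ⋂_{F face of Q, q ∉ F} p_F. -/

import Mathlib

/-!
A face `F` of `Q` is exactly a submonoid for which `x^a ↦ [a ∈ F] x^a` is multiplicative, so this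
projection is a ring endomorphism of `k[Q]` whose kernel is `p_F`; as `k[Q]` is a domain, `p_F` is
prime, and it contains `x^q` when `q ∉ F`. Conversely, the elements `a` dividing some multiple
`m • p` form a face containing `p`; if `p` lies in every face containing `q`, then `q` lies in it,
i.e. `q + r = m • p`, so `(x^p)^m ∈ (x^q)`. A polynomial in every `p_F` with `q ∉ F` is supported on
such `p`, hence lies in the radical.
-/

namespace AddSubmonoid

variable {M : Type*} [AddCommMonoid M]

def IsFace (F : AddSubmonoid M) : Prop := ∀ ⦃a b : M⦄, a + b ∈ F → a ∈ F ∧ b ∈ F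

theorem IsFace.add_mem_iff {F : AddSubmonoid M} (hF : F.IsFace) {a b : M} :
    a + b ∈ F ↔ a ∈ F ∧ b ∈ F :=
  ⟨(hF ·), fun h => F.add_mem h.1 h.2⟩

def faceOf (p : M) : AddSubmonoid M where
  carrier := {a | ∃ (m : ℕ) (c : M), m • p = a + c}
  zero_mem' := ⟨0, 0, by simp⟩
  add_mem' := by
    rintro a b ⟨m, c, hc⟩ ⟨m', c', hc'⟩
    exact ⟨m + m', c + c', by rw [add_nsmul, hc, hc']; abel⟩

theorem mem_faceOf_self (p : M) : p ∈ faceOf p := ⟨1, 0, by simp⟩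

theorem isFace_faceOf (p : M) : (faceOf p).IsFace := by
  rintro a b ⟨m, c, hc⟩
  exact ⟨⟨m, b + c, by rw [hc, add_assoc]⟩, ⟨m, a + c, by rw [hc]; abel⟩⟩

theorem exists_nsmul_eq_add_of_forall_isFace {p q : M}
    (h : ∀ F : AddSubmonoid M, F.IsFace → q ∉ F → p ∉ F) :
    ∃ (m : ℕ) (r : M), m • p = q + r := by
  by_contra hq
  exact h _ (isFace_faceOf p) hq (mem_faceOf_self p)

instance uniqueSums {G : Type*} [AddMonoid G] [UniqueSums G] (Q : AddSubmonoid G) :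
    UniqueSums Q :=
  UniqueSums.of_injective_addHom Q.subtype.toAddHom Subtype.val_injective inferInstance

end AddSubmonoid

namespace AddMonoidAlgebra

open AddSubmonoid

variable {M : Type*} [AddCommMonoid M] {F : AddSubmonoid M}

section CommSemiring

variable {k : Type*} [CommSemiring k]

variable (k) in
noncomputable def faceIdeal (F : AddSubmonoid M) : Ideal (AddMonoidAlgebra k M) :=
  Ideal.span {x | ∃ p, p ∉ F ∧ x = single p 1}

theorem mem_faceIdeal_iff (hF : F.IsFace) {f : AddMonoidAlgebra k M} :
    f ∈ faceIdeal k F ↔ ∀ a ∈ f.coeff.support, a ∉ F := by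
  have hgen : {x | ∃ p, p ∉ F ∧ x = single p 1} = of' k M '' (F : Set M)ᶜ := by
    ext x
    simp [eq_comm, of'_apply]
  rw [faceIdeal, hgen, mem_ideal_span_of'_image]
  refine forall₂_congr fun a _ => ⟨?_, fun ha => ⟨a, ha, 0, (zero_add a).symm⟩⟩
  rintro ⟨b, hb, d, rfl⟩ hdb
  exact hb (hF hdb).2

open Classical in
variable (k) in
noncomputable def faceProjection (hF : F.IsFace) :
    AddMonoidAlgebra k M →ₐ[k] AddMonoidAlgebra k M :=
  lift k _ M
    { toFun a := if a.toAdd ∈ F then of' k M a.toAdd else 0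
      map_one' := by simp [F.zero_mem, one_def]
      map_mul' a b := by
        simp only [toAdd_mul, hF.add_mem_iff]
        split_ifs <;> simp_all [of'_apply, single_mul_single] }

theorem faceProjection_single_of_notMem (hF : F.IsFace) {p : M} (hp : p ∉ F) (c : k) :
    faceProjection k hF (single p c) = 0 := by
  simp [faceProjection, hp]

theorem coeff_faceProjection_of_mem (hF : F.IsFace) (f : AddMonoidAlgebra k M) {a : M}
    (ha : a ∈ F) : (faceProjection k hF f).coeff a = f.coeff a := by
  induction f using induction_linear with
  | zero => simp
  | add f g hf hg => simp [hf, hg]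
  | single b c =>
    by_cases hb : b ∈ F
    · simp [faceProjection, hb, of'_apply]
    · have hba : b ≠ a := fun h => hb (h ▸ ha)
      simp [faceProjection, hb, hba]

theorem faceIdeal_eq_ker (hF : F.IsFace) :
    faceIdeal k F = RingHom.ker (faceProjection k hF) := by
  refine le_antisymm ?_ fun f hf => (mem_faceIdeal_iff hF).2 fun a ha haF => ?_
  · rw [faceIdeal, Ideal.span_le]
    rintro _ ⟨p, hp, rfl⟩
    exact faceProjection_single_of_notMem hF hp 1
  · rw [Finsupp.mem_support_iff, ← coeff_faceProjection_of_mem hF f haF] at ha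
    exact ha (by simp [RingHom.mem_ker.1 hf])

theorem of'_mem_radical_span_of' {p q r : M} {m : ℕ} (h : m • p = q + r) :
    of' k M p ∈ (Ideal.span {of' k M q}).radical :=
  ⟨m, Ideal.mem_span_singleton'.2
    ⟨of' k M r, by simp [of'_apply, single_pow, h, single_mul_single, add_comm]⟩⟩

end CommSemiring

variable {k : Type*} [CommRing k] [IsDomain k] [UniqueSums M]

theorem isPrime_faceIdeal (hF : F.IsFace) : (faceIdeal k F).IsPrime := by
  rw [faceIdeal_eq_ker hF]
  exact RingHom.ker_isPrime _

theorem radical_span_of'_eq_iInf_faceIdeal (q : M) :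
    (Ideal.span {of' k M q}).radical =
      ⨅ (F : AddSubmonoid M) (_ : F.IsFace ∧ q ∉ F), faceIdeal k F := by
  refine le_antisymm (le_iInf₂ fun F ⟨hF, hqF⟩ => ?_) fun f hf => ?_
  · rw [(isPrime_faceIdeal hF).radical_le_iff, Ideal.span_singleton_le_iff_mem]
    exact Ideal.subset_span ⟨q, hqF, rfl⟩
  · have hdivides : Ideal.span (of' k M '' {p | ∃ (m : ℕ) (r : M), m • p = q + r}) ≤
        (Ideal.span {of' k M q}).radical := by
      rw [Ideal.span_le]
      rintro _ ⟨p, ⟨m, r, h⟩, rfl⟩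
      exact of'_mem_radical_span_of' h
    refine hdivides (mem_ideal_span_of'_image.2 fun a ha => ⟨a, ?_, 0, (zero_add a).symm⟩)
    refine exists_nsmul_eq_add_of_forall_isFace fun F hF hqF => ?_
    exact (mem_faceIdeal_iff hF).1 (Ideal.mem_iInf.1 (Ideal.mem_iInf.1 hf F) ⟨hF, hqF⟩) a ha

end AddMonoidAlgebra

theorem radical_monomial_eq_iInf_face_ideals_general
    {k : Type*} [Field k] {n : ℕ}
    (Q : AddSubmonoid (Fin n → ℤ)) (q : Fin n → ℤ) (hq : q ∈ Q) :
    (Ideal.span {AddMonoidAlgebra.single (⟨q, hq⟩ : Q) (1 : k)}).radical =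
      ⨅ (F : AddSubmonoid (Fin n → ℤ))
        (_ : F ≤ Q ∧
          (∀ a b : Fin n → ℤ, a ∈ Q → b ∈ Q → a + b ∈ F → a ∈ F ∧ b ∈ F) ∧ q ∉ F),
        Ideal.span {x : AddMonoidAlgebra k Q |
          ∃ p : Q, (p : Fin n → ℤ) ∉ F ∧ x = AddMonoidAlgebra.single p 1} := by
  refine (AddMonoidAlgebra.radical_span_of'_eq_iInf_faceIdeal (k := k) (⟨q, hq⟩ : Q)).trans
    (le_antisymm ?_ ?_)
  · refine le_iInf₂ fun F ⟨_, hF, hqF⟩ => ?_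
    exact iInf₂_le (F.comap Q.subtype) ⟨fun a b h => hF a b a.2 b.2 h, hqF⟩
  · refine le_iInf₂ fun G ⟨hG, hqG⟩ => ?_
    have hGQ : G.map Q.subtype ≤ Q := by
      rintro _ ⟨a, -, rfl⟩
      exact a.2
    have hGface : ∀ a b : Fin n → ℤ, a ∈ Q → b ∈ Q → a + b ∈ G.map Q.subtype →
        a ∈ G.map Q.subtype ∧ b ∈ G.map Q.subtype := by
      rintro a b ha hb ⟨c, hc, hcab⟩
      obtain rfl : c = ⟨a, ha⟩ + ⟨b, hb⟩ := Subtype.ext hcab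
      exact ⟨⟨_, (hG hc).1, rfl⟩, ⟨_, (hG hc).2, rfl⟩⟩
    have hqG' : q ∉ G.map Q.subtype := by
      rintro ⟨c, hc, rfl⟩
      exact hqG hc
    refine (iInf₂_le (G.map Q.subtype) ⟨hGQ, hGface, hqG'⟩).trans_eq ?_
    change AddMonoidAlgebra.faceIdeal k ((G.map Q.subtype).comap Q.subtype) =
      AddMonoidAlgebra.faceIdeal k G
    rw [AddSubmonoid.comap_map_eq_of_injective Subtype.val_injective]

/-- Let `Q` be an additive submonoid of `ℤⁿ` and `q ∈ Q`, `q ≠ 0`.  For a face `F` of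
`Q`, let `p_F` be the ideal of `k[Q]` spanned by the monomials `x^p`, `p ∈ Q \ F`.
Then the radical of the principal ideal `(x^q)` equals the intersection of the ideals
`p_F` over all faces `F` of `Q` with `q ∉ F`. -/
theorem radical_monomial_eq_iInf_face_ideals
    {k : Type*} [Field k] {n : ℕ}
    (Q : AddSubmonoid (Fin n → ℤ)) (q : Fin n → ℤ) (hq : q ∈ Q) (hq0 : q ≠ 0) :
    (Ideal.span {AddMonoidAlgebra.single (⟨q, hq⟩ : Q) (1 : k)}).radical =
      ⨅ (F : AddSubmonoid (Fin n → ℤ))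
        (_ : F ≤ Q ∧
          (∀ a b : Fin n → ℤ, a ∈ Q → b ∈ Q → a + b ∈ F → a ∈ F ∧ b ∈ F) ∧ q ∉ F),
        Ideal.span {x : AddMonoidAlgebra k Q |
          ∃ p : Q, (p : Fin n → ℤ) ∉ F ∧ x = AddMonoidAlgebra.single p 1} :=
  radical_monomial_eq_iInf_face_ideals_general Q q hq
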